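/- Let n be a positive integer, n* := n/gcd(n,2). For all partitions 𝔭 of type C (even size, odd parts with even multiplicity) and all partitions 𝔮, the type C duality satisfies d_{com,C}^{(n)}(𝔭 ⊔ 𝔮 ⊔ 𝔮) = (d_{com,C}^{(n)}(𝔭) + 2·d_{com,A}^{(n*)}(𝔮))_C, in the case n even with n/2 even, where d_{com,C}^{(n)}(𝔭) := (d_{com,A}^{(n/2)}(𝔭))_C. -/

import Mathlib

noncomputable section
open scoped Classical

namespace PaperStmt

/-- The parts of a partition (multiset of naturals) sorted in non-increasing order. -/
def sortDesc (p : Multiset ℕ) : List ℕ := (p.sort (· ≤ ·)).reverse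

/-- Partial sum of the first `k` entries of a list. -/
def psum (l : List ℕ) (k : ℕ) : ℕ := (l.take k).sum

/-- Dominance order on partitions of the same integer. -/
def Dom (p q : Multiset ℕ) : Prop :=
  p.sum = q.sum ∧ ∀ k, psum (sortDesc p) k ≤ psum (sortDesc q) k

/-- A partition: a multiset of positive parts. -/
def IsPartition (p : Multiset ℕ) : Prop := 0 ∉ p

/-- Type B: partition of an odd integer, every even part with even multiplicity. -/
def typeB (p : Multiset ℕ) : Prop := Odd p.sum ∧ ∀ v ≠ 0, Even v → Even (p.count v)

/-- Type C: partition of an even integer, every odd part with even multiplicity. -/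
def typeC (p : Multiset ℕ) : Prop := Even p.sum ∧ ∀ v, Odd v → Even (p.count v)

/-- Type D: partition of an even integer, every even part with even multiplicity. -/
def typeD (p : Multiset ℕ) : Prop := Even p.sum ∧ ∀ v ≠ 0, Even v → Even (p.count v)

/-- `q` is the `X`-collapse of `p`: the largest partition of type `X` below `p`
in dominance order. -/
def IsCollapse (X : Multiset ℕ → Prop) (p q : Multiset ℕ) : Prop :=
  X q ∧ Dom q p ∧ ∀ q', X q' → Dom q' p → Dom q' q

def collapse (X : Multiset ℕ → Prop) (p : Multiset ℕ) : Multiset ℕ :=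
  if h : ∃ q, IsCollapse X p q then h.choose else 0

def collapseB : Multiset ℕ → Multiset ℕ := collapse typeB
def collapseC : Multiset ℕ → Multiset ℕ := collapse typeC
def collapseD : Multiset ℕ → Multiset ℕ := collapse typeD

/-- The largest part. -/
def maxPart (p : Multiset ℕ) : ℕ := (sortDesc p).headI

/-- The smallest (positive) part. -/
def minPart (p : Multiset ℕ) : ℕ := (sortDesc p).getLastD 0

/-- `p⁺`: add 1 to the largest part. -/
def pplus (p : Multiset ℕ) : Multiset ℕ := (maxPart p + 1) ::ₘ p.erase (maxPart p)

/-- `p⁻`: subtract 1 from the smallest part, dropping a resulting zero. -/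
def pminus (p : Multiset ℕ) : Multiset ℕ :=
  Multiset.filter (0 < ·) ((minPart p - 1) ::ₘ p.erase (minPart p))

/-- `p⁺⁻`: add 1 to the largest part and subtract 1 from the smallest part. -/
def pmOp (p : Multiset ℕ) : Multiset ℕ := pminus (pplus p)

def zipSum : List ℕ → List ℕ → List ℕ
  | [], l => l
  | a :: as, [] => a :: as
  | a :: as, b :: bs => (a + b) :: zipSum as bs

/-- Coordinatewise sum of two partitions. -/
def addP (p q : Multiset ℕ) : Multiset ℕ := (zipSum (sortDesc p) (sortDesc q) : List ℕ)

/-- Double every part of a partition. -/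
def doubleP (p : Multiset ℕ) : Multiset ℕ := p.map (fun v => 2 * v)

/-- The partition `𝔰(m; n) = (n^a, b)` where `m = n a + b`, `0 ≤ b < n`. -/
def sMn (m n : ℕ) : Multiset ℕ :=
  Multiset.replicate (m / n) n + (if m % n = 0 then 0 else {m % n})

/-- The duality `d_{com,A}^{(n)}`: coordinatewise sum of the `𝔰(pᵢ; n)`. -/
def dcomA (n : ℕ) (p : Multiset ℕ) : Multiset ℕ :=
  (sortDesc p).foldr (fun q acc => addP (sMn q n) acc) 0

/-- Transpose (conjugate) of a partition: the `j`-th part is `#{i : pᵢ ≥ j}`. -/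
def transposeP (p : Multiset ℕ) : Multiset ℕ :=
  Multiset.filter (0 < ·)
    ((Multiset.range (maxPart p)).map (fun j => (p.filter (fun v => j + 1 ≤ v)).card))


/-- The type `C` duality `d_{com,C}^{(n)}` in the case `n` even with `n/2` even. -/
def dcomC (n : ℕ) (p : Multiset ℕ) : Multiset ℕ := collapseC (dcomA (n / 2) p)

/-!
The duality `d_{com,A}^{(m)}` turns disjoint union into coordinatewise sum, so with `m = n/2`
the left side is the `C`-collapse of `d_A(𝔭) + 2·d_A(𝔮)`. Since `m` is even, every part of
`d_A(𝔭)` is even: an even part `v` of `𝔭` contributes `𝔰(v; m)`, whose parts are `m` and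
`v mod m`, and the odd parts of `𝔭` form some `𝔴 ⊔ 𝔴`, which contributes `2·d_A(𝔴)`.
Hence `d_A(𝔭)` is already of type `C`, so it and its collapse dominate each other.
Coordinatewise addition is monotone for dominance, and a collapse only depends on the
dominance class of its argument.
-/

lemma sortDesc_pairwise (p : Multiset ℕ) : (sortDesc p).Pairwise (· ≥ ·) := by
  rw [sortDesc, List.pairwise_reverse]
  exact Multiset.pairwise_sort p (· ≤ ·)

lemma coe_sortDesc (p : Multiset ℕ) : ((sortDesc p : List ℕ) : Multiset ℕ) = p := by
  rw [sortDesc, Multiset.coe_reverse, Multiset.sort_eq]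

lemma mem_sortDesc {p : Multiset ℕ} {v : ℕ} : v ∈ sortDesc p ↔ v ∈ p := by
  rw [← Multiset.mem_coe, coe_sortDesc]

lemma sortDesc_zero : sortDesc 0 = [] := by
  simp [sortDesc]

lemma sortDesc_coe_of_pairwise {l : List ℕ} (h : l.Pairwise (· ≥ ·)) :
    sortDesc (l : Multiset ℕ) = l := by
  have : Multiset.sort (l : Multiset ℕ) (· ≤ ·) = l.reverse := by
    apply List.Perm.eq_of_pairwise' (r := (· ≤ ·))
    · exact Multiset.pairwise_sort _ _
    · exact List.pairwise_reverse.mpr h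
    · rw [← Multiset.coe_eq_coe, Multiset.sort_eq, Multiset.coe_reverse]
  rw [sortDesc, this, List.reverse_reverse]

lemma headI_le_of_pairwise_cons {x : ℕ} {xs : List ℕ} (h : (x :: xs).Pairwise (· ≥ ·)) :
    xs.headI ≤ x := by
  cases xs with
  | nil => exact Nat.zero_le x
  | cons y ys => exact List.rel_of_pairwise_cons h List.mem_cons_self

lemma le_headI_of_pairwise {l : List ℕ} (h : l.Pairwise (· ≥ ·)) {z : ℕ} (hz : z ∈ l) :
    z ≤ l.headI := by
  cases l with
  | nil => cases hz
  | cons x xs =>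
    rcases List.mem_cons.mp hz with rfl | hz
    · exact le_rfl
    · exact List.rel_of_pairwise_cons h hz

section zipSum

lemma zipSum_nil (l : List ℕ) : zipSum l [] = l := by
  cases l <;> rfl

lemma zipSum_comm : ∀ a b : List ℕ, zipSum a b = zipSum b a
  | [], l => (zipSum_nil l).symm
  | _ :: _, [] => rfl
  | a :: as, b :: bs => by rw [zipSum, zipSum, Nat.add_comm, zipSum_comm as bs]

lemma zipSum_assoc : ∀ a b c : List ℕ, zipSum (zipSum a b) c = zipSum a (zipSum b c)
  | [], _, _ => rfl
  | _ :: _, [], _ => rfl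
  | _ :: _, _ :: _, [] => by rw [zipSum_nil, zipSum_nil]
  | a :: as, b :: bs, c :: cs => by simp only [zipSum, Nat.add_assoc, zipSum_assoc as bs cs]

lemma zipSum_self : ∀ l : List ℕ, zipSum l l = l.map (2 * ·)
  | [] => rfl
  | a :: as => by rw [zipSum, zipSum_self as, List.map_cons, Nat.two_mul]

lemma sum_take_zipSum : ∀ (a b : List ℕ) (k : ℕ),
    ((zipSum a b).take k).sum = (a.take k).sum + (b.take k).sum
  | [], b, k => by simp [zipSum]
  | _ :: _, [], k => by simp [zipSum]
  | _ :: _, _ :: _, 0 => rfl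
  | a :: as, b :: bs, k + 1 => by
    simp only [zipSum, List.take_succ_cons, List.sum_cons, sum_take_zipSum as bs k]
    omega

lemma sum_zipSum : ∀ a b : List ℕ, (zipSum a b).sum = a.sum + b.sum
  | [], _ => (Nat.zero_add _).symm
  | _ :: _, [] => rfl
  | a :: as, b :: bs => by
    rw [zipSum, List.sum_cons, List.sum_cons, List.sum_cons, sum_zipSum as bs]
    omega

lemma headI_zipSum : ∀ a b : List ℕ, (zipSum a b).headI = a.headI + b.headI
  | [], _ => (Nat.zero_add _).symm
  | _ :: _, [] => rfl
  | _ :: _, _ :: _ => rfl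

lemma pairwise_zipSum {a b : List ℕ} (ha : a.Pairwise (· ≥ ·)) (hb : b.Pairwise (· ≥ ·)) :
    (zipSum a b).Pairwise (· ≥ ·) := by
  induction a generalizing b with
  | nil => exact hb
  | cons x xs ih =>
    cases b with
    | nil => exact ha
    | cons y ys =>
      have hzip := ih ha.of_cons hb.of_cons
      refine List.pairwise_cons.mpr ⟨fun z hz => ?_, hzip⟩
      calc z ≤ (zipSum xs ys).headI := le_headI_of_pairwise hzip hz
        _ = xs.headI + ys.headI := headI_zipSum xs ys
        _ ≤ x + y :=
          Nat.add_le_add (headI_le_of_pairwise_cons ha) (headI_le_of_pairwise_cons hb)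

lemma even_of_mem_zipSum {a b : List ℕ} (ha : ∀ x ∈ a, Even x) (hb : ∀ x ∈ b, Even x) :
    ∀ z ∈ zipSum a b, Even z := by
  induction a generalizing b with
  | nil => exact hb
  | cons x xs ih =>
    cases b with
    | nil => exact ha
    | cons y ys =>
      simp only [zipSum, List.forall_mem_cons] at ha hb ⊢
      exact ⟨ha.1.add hb.1, ih ha.2 hb.2⟩

end zipSum

section addP

lemma sortDesc_addP (p q : Multiset ℕ) :
    sortDesc (addP p q) = zipSum (sortDesc p) (sortDesc q) :=
  sortDesc_coe_of_pairwise (pairwise_zipSum (sortDesc_pairwise p) (sortDesc_pairwise q))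

lemma zero_addP (p : Multiset ℕ) : addP 0 p = p := by
  rw [addP, sortDesc_zero]
  exact coe_sortDesc p

lemma addP_comm (p q : Multiset ℕ) : addP p q = addP q p := by
  rw [addP, addP, zipSum_comm]

lemma addP_assoc (p q r : Multiset ℕ) : addP (addP p q) r = addP p (addP q r) := by
  rw [addP, sortDesc_addP, addP, sortDesc_addP, zipSum_assoc]

lemma addP_self (p : Multiset ℕ) : addP p p = doubleP p := by
  rw [addP, zipSum_self, ← Multiset.map_coe, coe_sortDesc, doubleP]

lemma sum_addP (p q : Multiset ℕ) : (addP p q).sum = p.sum + q.sum := by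
  rw [addP, Multiset.sum_coe, sum_zipSum, ← Multiset.sum_coe, ← Multiset.sum_coe, coe_sortDesc,
    coe_sortDesc]

lemma psum_addP (p q : Multiset ℕ) (k : ℕ) :
    psum (sortDesc (addP p q)) k = psum (sortDesc p) k + psum (sortDesc q) k := by
  rw [sortDesc_addP, psum, psum, psum, sum_take_zipSum]

lemma even_of_mem_addP {p q : Multiset ℕ} (hp : ∀ x ∈ p, Even x) (hq : ∀ x ∈ q, Even x) :
    ∀ x ∈ addP p q, Even x := fun x hx =>
  even_of_mem_zipSum (fun u hu => hp u (mem_sortDesc.mp hu))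
    (fun u hu => hq u (mem_sortDesc.mp hu)) x (Multiset.mem_coe.mp hx)

end addP

section Dom

lemma Dom.refl (p : Multiset ℕ) : Dom p p := ⟨rfl, fun _ => le_rfl⟩

lemma Dom.trans {p q r : Multiset ℕ} (h₁ : Dom p q) (h₂ : Dom q r) : Dom p r :=
  ⟨h₁.1.trans h₂.1, fun k => (h₁.2 k).trans (h₂.2 k)⟩

lemma Dom.addP_right {a b : Multiset ℕ} (h : Dom a b) (r : Multiset ℕ) :
    Dom (addP a r) (addP b r) := by
  refine ⟨by rw [sum_addP, sum_addP, h.1], fun k => ?_⟩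
  rw [psum_addP, psum_addP]
  exact Nat.add_le_add_right (h.2 k) _

end Dom

section collapse

variable {X : Multiset ℕ → Prop}

lemma isCollapse_self {t : Multiset ℕ} (h : X t) : IsCollapse X t t :=
  ⟨h, Dom.refl t, fun _ _ hd => hd⟩

lemma isCollapse_collapse {t : Multiset ℕ} (hex : ∃ c, IsCollapse X t c) :
    IsCollapse X t (collapse X t) := by
  rw [collapse, dif_pos hex]
  exact hex.choose_spec

lemma dom_collapse_of_self {t : Multiset ℕ} (h : X t) :
    Dom (collapse X t) t ∧ Dom t (collapse X t) :=
  have hc := isCollapse_collapse ⟨t, isCollapse_self h⟩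
  ⟨hc.2.1, hc.2.2 t h (Dom.refl t)⟩

lemma collapse_congr_of_dom {a b : Multiset ℕ} (hab : Dom a b) (hba : Dom b a) :
    collapse X a = collapse X b := by
  have : IsCollapse X a = IsCollapse X b := by
    funext c
    exact propext
      ⟨fun ⟨hc, hd, hmax⟩ => ⟨hc, hd.trans hab, fun q hq hd => hmax q hq (hd.trans hba)⟩,
        fun ⟨hc, hd, hmax⟩ => ⟨hc, hd.trans hba, fun q hq hd => hmax q hq (hd.trans hab)⟩⟩
  rw [collapse, collapse, this]

end collapse

section dcomA

lemma dcomA_coe (n : ℕ) (l : List ℕ) :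
    dcomA n l = l.foldr (fun v acc => addP (sMn v n) acc) 0 := by
  have : LeftCommutative fun v acc => addP (sMn v n) acc :=
    ⟨fun a b c => by rw [← addP_assoc, ← addP_assoc, addP_comm (sMn a n)]⟩
  exact (Multiset.coe_eq_coe.mp (coe_sortDesc l)).foldr_eq 0

lemma dcomA_zero (n : ℕ) : dcomA n 0 = 0 := dcomA_coe n []

lemma dcomA_cons (n a : ℕ) (s : Multiset ℕ) :
    dcomA n (a ::ₘ s) = addP (sMn a n) (dcomA n s) :=
  Quotient.inductionOn s fun l => by
    rw [Multiset.quot_mk_to_coe, Multiset.cons_coe, dcomA_coe, dcomA_coe, List.foldr_cons]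

lemma dcomA_add (n : ℕ) (s t : Multiset ℕ) :
    dcomA n (s + t) = addP (dcomA n s) (dcomA n t) := by
  induction s using Multiset.induction_on with
  | empty => rw [zero_add, dcomA_zero, zero_addP]
  | cons a s ih => rw [Multiset.cons_add, dcomA_cons, dcomA_cons, ih, addP_assoc]

lemma even_of_mem_sMn {v m : ℕ} (hv : Even v) (hm : Even m) {x : ℕ} (hx : x ∈ sMn v m) :
    Even x := by
  rw [sMn, Multiset.mem_add] at hx
  rcases hx with hx | hx
  · rw [Multiset.eq_of_mem_replicate hx]
    exact hm
  · split_ifs at hx with h0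
    · cases hx
    · rw [Multiset.mem_singleton.mp hx, Nat.even_iff, Nat.mod_mod_of_dvd v hm.two_dvd]
      exact Nat.even_iff.mp hv

lemma even_of_mem_dcomA {m : ℕ} (hm : Even m) {e : Multiset ℕ} (he : ∀ x ∈ e, Even x) :
    ∀ x ∈ dcomA m e, Even x := by
  induction e using Multiset.induction_on with
  | empty => simp [dcomA_zero]
  | cons a s ih =>
    rw [Multiset.forall_mem_cons] at he
    rw [dcomA_cons]
    exact even_of_mem_addP (fun _ => even_of_mem_sMn he.1 hm) (ih he.2)

end dcomA

lemma exists_eq_add_self_of_even_count {α : Type*} [DecidableEq α] (o : Multiset α)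
    (h : ∀ v, Even (o.count v)) : ∃ w, o = w + w := by
  refine ⟨Finsupp.toMultiset (Finsupp.mapRange (· / 2) (Nat.zero_div 2) o.toFinsupp), ?_⟩
  ext v
  rw [Multiset.count_add, Finsupp.count_toMultiset, Finsupp.mapRange_apply,
    Multiset.toFinsupp_apply]
  obtain ⟨k, hk⟩ := h v
  omega

lemma typeC_of_forall_even {t : Multiset ℕ} (h : ∀ x ∈ t, Even x) : typeC t := by
  refine ⟨Multiset.sum_induction Even t (fun _ _ => Even.add) .zero h, fun v hv => ?_⟩
  rw [Multiset.count_eq_zero_of_notMem fun hmem => Nat.not_even_iff_odd.mpr hv (h v hmem)]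
  exact .zero

lemma even_of_mem_dcomA_of_typeC {m : ℕ} (hm : Even m) {p : Multiset ℕ} (hC : typeC p) :
    ∀ x ∈ dcomA m p, Even x := by
  obtain ⟨w, hw⟩ := exists_eq_add_self_of_even_count (p.filter Odd) fun v => by
    rw [Multiset.count_filter]
    split_ifs with hv
    · exact hC.2 v hv
    · exact .zero
  rw [← Multiset.filter_add_not Odd p, hw, dcomA_add, dcomA_add, addP_self]
  refine even_of_mem_addP (fun x hx => ?_) (even_of_mem_dcomA hm fun x hx => ?_)
  · obtain ⟨v, -, rfl⟩ := Multiset.mem_map.mp hx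
    exact even_two_mul v
  · exact Nat.not_odd_iff_even.mp (Multiset.mem_filter.mp hx).2

theorem dcomC_ind_general (n : ℕ) (hn2 : Even (n / 2))
    (p q : Multiset ℕ) (hC : typeC p) :
    dcomC n (p + q + q) = collapseC (addP (dcomC n p) (doubleP (dcomA (n / 2) q))) := by
  have hA : typeC (dcomA (n / 2) p) := typeC_of_forall_even (even_of_mem_dcomA_of_typeC hn2 hC)
  obtain ⟨hle, hge⟩ := dom_collapse_of_self hA
  rw [dcomC, dcomA_add, dcomA_add, addP_assoc, addP_self]
  exact collapse_congr_of_dom (hge.addP_right _) (hle.addP_right _)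

/-- compatibility of `d_{com,C}^{(n)}` with induction,
in the case `n` even with `n/2` even. -/
theorem dcomC_ind (n : ℕ) (hn : 0 < n) (hne : Even n) (hn2 : Even (n / 2))
    (p q : Multiset ℕ) (hp : IsPartition p) (hq : IsPartition q) (hC : typeC p) :
    dcomC n (p + q + q) = collapseC (addP (dcomC n p) (doubleP (dcomA (n / 2) q))) :=
  dcomC_ind_general n hn2 p q hC

end PaperStmt
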